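/- Let F ∈ Ž²(W, ℤ^n) be a Čech 2-cocycle on an open cover W of Z. Define the truncated complex with cochains in degree k being pairs (φ^{k1}, φ^{(k-1)2}) where φ^{k1} ∈ Č^k(W, ℤ^n) and φ^{(k-1)2} ∈ Č^{k-1}(W, M_n^u(ℤ)), with differential D̄_F(φ^{k1}, φ^{(k-1)2}) := (∂̌φ^{k1} + (−1)^{k+1} φ^{(k-1)2} ∪₁ F, ∂̌φ^{(k-1)2}). Then D̄_F ∘ D̄_F = 0. -/

import Mathlib

/-- A Čech `k`-cochain on a cover indexed by `ι` of a space `Z`, with values in `A`,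
modelled as a totally defined function of a `(k+1)`-tuple of indices and a point. -/
abbrev Cochain (ι Z A : Type*) (k : ℕ) := (Fin (k + 1) → ι) → Z → A

/-- The Čech differential `(∂̌φ)_{λ₀…λ_{k+1}} = Σ_l (-1)^l φ_{λ₀…λ̂_l…λ_{k+1}}`. -/
def cechD {ι Z A : Type*} [AddCommGroup A] {k : ℕ} (φ : Cochain ι Z A k) :
    Cochain ι Z A (k + 1) :=
  fun σ z => ∑ l : Fin (k + 2), ((-1 : ℤ) ^ (l : ℕ)) • φ (σ ∘ l.succAbove) z

/-- The Steenrod cochain `C(F)_{λ₀λ₁λ₂λ₃}(z)_{ij}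
  = F_{λ₀λ₁λ₂}(z)_i F_{λ₀λ₂λ₃}(z)_j − F_{λ₁λ₂λ₃}(z)_i F_{λ₀λ₁λ₃}(z)_j`. -/
def CFm {ι Z : Type*} {n : ℕ} (F : ι → ι → ι → Z → Fin n → ℤ) :
    ι → ι → ι → ι → Z → Fin n → Fin n → ℤ :=
  fun a b c d z i j => F a b c z i * F a c d z j - F b c d z i * F a b d z j

/-- `φ ∪₁ F` for a ℤⁿ-valued `k`-cochain `φ`:
`(φ ∪₁ F)_{λ₀…λ_{k+2}}(z) = Σ_l φ_{λ₀…λ_k}(z)_l F_{λ_k λ_{k+1} λ_{k+2}}(z)_l`. -/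
def cup1v {ι Z : Type*} {n k : ℕ} (φ : Cochain ι Z (Fin n → ℤ) k)
    (F : ι → ι → ι → Z → Fin n → ℤ) : Cochain ι Z ℤ (k + 2) :=
  fun σ z => ∑ l : Fin n,
    φ (fun i : Fin (k + 1) => σ (Fin.castLE (by omega) i)) z l *
      F (σ ⟨k, by omega⟩) (σ ⟨k + 1, by omega⟩) (σ ⟨k + 2, by omega⟩) z l

/-- `ψ ∪₁ F` for a matrix-valued `k`-cochain `ψ`:
`(ψ ∪₁ F)_{λ₀…λ_{k+2}}(z)_l
  = Σ_{i<j} ψ_{λ₀…λ_k}(z)_{ij} (F_{λ_k λ_{k+1} λ_{k+2}}(z)_i (e_l)_j − (e_l)_i F(z)_j)`. -/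
def cup1m {ι Z : Type*} {n k : ℕ} (ψ : Cochain ι Z (Fin n → Fin n → ℤ) k)
    (F : ι → ι → ι → Z → Fin n → ℤ) : Cochain ι Z (Fin n → ℤ) (k + 2) :=
  fun σ z l => ∑ i : Fin n, ∑ j : Fin n,
    if i < j then
      ψ (fun i' : Fin (k + 1) => σ (Fin.castLE (by omega) i')) z i j *
        (F (σ ⟨k, by omega⟩) (σ ⟨k + 1, by omega⟩) (σ ⟨k + 2, by omega⟩) z i *
            (if l = j then 1 else 0)
          - (if l = i then 1 else 0) *
            F (σ ⟨k, by omega⟩) (σ ⟨k + 1, by omega⟩) (σ ⟨k + 2, by omega⟩) z j)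
    else 0

/-- `ψ ∪₂ C(F)` for a matrix-valued `k`-cochain `ψ`:
`(ψ ∪₂ C(F))_{λ₀…λ_{k+3}}(z) = Σ_{i<j} ψ_{λ₀…λ_k}(z)_{ij} C(F)_{λ_k…λ_{k+3}}(z)_{ij}`. -/
def cup2m {ι Z : Type*} {n k : ℕ} (ψ : Cochain ι Z (Fin n → Fin n → ℤ) k)
    (F : ι → ι → ι → Z → Fin n → ℤ) : Cochain ι Z ℤ (k + 3) :=
  fun σ z => ∑ i : Fin n, ∑ j : Fin n,
    if i < j then
      ψ (fun i' : Fin (k + 1) => σ (Fin.castLE (by omega) i')) z i j *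
        CFm F (σ ⟨k, by omega⟩) (σ ⟨k + 1, by omega⟩) (σ ⟨k + 2, by omega⟩)
          (σ ⟨k + 3, by omega⟩) z i j
    else 0

/-- The differential `D̄_F` of the truncated dimensionally reduced complex, on a
pair `(φ^{k1}, φ^{(k-1)2})` of Čech degrees `(K+1, K)` (so `k = K+1`):
`D̄_F(φ^{k1}, φ^{(k-1)2}) = (∂̌φ^{k1} + (−1)^{k+1} φ^{(k-1)2} ∪₁ F, ∂̌φ^{(k-1)2})`. -/
def DFbar {ι Z : Type*} {n : ℕ} (K : ℕ) (F : ι → ι → ι → Z → Fin n → ℤ)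
    (p : Cochain ι Z (Fin n → ℤ) (K + 1) × Cochain ι Z (Fin n → Fin n → ℤ) K) :
    Cochain ι Z (Fin n → ℤ) (K + 2) × Cochain ι Z (Fin n → Fin n → ℤ) (K + 1) :=
  (cechD p.1 + ((-1 : ℤ) ^ (K + 2)) • cup1m p.2 F, cechD p.2)

/-!
The Čech differential `∂̌` is the alternating coface differential of the cosimplicial group of
cochains, so `∂̌ ∘ ∂̌ = 0`. The product `ψ ∪₁ F` is the front-face/back-face cup product of `ψ` and
`F` for a bilinear pairing `M_n^u(ℤ) × ℤⁿ → ℤⁿ`, hence satisfies the Leibniz rule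
`∂̌(ψ ∪ F) = ∂̌ψ ∪ F + (-1)^k ψ ∪ ∂̌F`. For a cocycle `F` this says that `∂̌` commutes with `∪₁ F`,
and the sign `(-1)^{k+1}` in `D̄_F` flips between consecutive degrees, so the cross terms of
`D̄_F ∘ D̄_F` cancel.
-/

open CategoryTheory AlgebraicTopology

lemma AddCommGrpCat.hom_finset_sum_apply {M N : AddCommGrpCat} {α : Type*} (s : Finset α)
    (f : α → (M ⟶ N)) (x : M) : (∑ i ∈ s, f i).hom x = ∑ i ∈ s, (f i).hom x :=
  (congrArg (fun g : M →+ N => g x) (map_sum AddCommGrpCat.homAddEquiv f s)).trans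
    (AddMonoidHom.finsetSum_apply _ _ _)

namespace Fin

lemma val_succAbove {N : ℕ} (p : Fin (N + 1)) (i : Fin N) :
    (p.succAbove i : ℕ) = if (i : ℕ) < p then (i : ℕ) else i + 1 := by
  unfold succAbove
  split_ifs <;> simp_all [lt_def]

variable {k m n : ℕ}

lemma castLE_succAbove_castLE (h : k + 1 ≤ n) (i x : Fin (k + 1)) :
    (castLE (by omega) i : Fin (n + 1)).succAbove (castLE h x) =
      castLE (by omega) (i.castSucc.succAbove x) := by
  ext
  simp only [val_succAbove, val_castLE, val_castSucc]

lemma castLE_succAbove_mk (h : k + m ≤ n) (i : Fin (k + 1)) (j : Fin (m + 1)) :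
    (castLE (by omega) i : Fin (n + 2)).succAbove ⟨k + j, by omega⟩ = ⟨k + 1 + j, by omega⟩ := by
  ext
  rw [val_succAbove, if_neg (by simp only [val_castLE]; omega)]
  dsimp only
  omega

lemma mk_succAbove_castLE (h : k + m ≤ n) (i : Fin (k + 1)) (j : Fin (m + 1)) :
    (⟨k + 1 + j, by omega⟩ : Fin (n + 2)).succAbove (castLE (by omega) i) = castLE (by omega) i := by
  ext
  rw [val_succAbove, if_pos (by simp only [val_castLE]; omega)]
  simp only [val_castLE]

lemma mk_succAbove_mk (h : k + m ≤ n) (i j : Fin (m + 1)) :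
    (⟨k + 1 + j, by omega⟩ : Fin (n + 2)).succAbove ⟨k + i, by omega⟩ =
      ⟨k + j.succ.succAbove i, by omega⟩ := by
  ext
  simp only [val_succAbove, val_succ]
  split_ifs <;> omega

lemma sum_univ_split {M : Type*} [AddCommMonoid M] {a b N : ℕ} (h : a + b = N) (f : Fin N → M) :
    ∑ t, f t = ∑ i : Fin a, f (castLE (by omega) i) + ∑ j : Fin b, f ⟨a + j, by omega⟩ := by
  subst h
  exact sum_univ_add f

end Fin

namespace Cochain

universe u v w

section Differential

variable {ι : Type u} {Z : Type v} {A : Type w} [AddCommGroup A]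

def cosimplicial (ι : Type u) (Z : Type v) (A : Type w) [AddCommGroup A] :
    CosimplicialObject AddCommGrpCat.{max u v w} where
  obj k := AddCommGrpCat.of (Cochain ι Z A k.len)
  map f := AddCommGrpCat.ofHom
    { toFun := fun φ σ => φ (σ ∘ f.toOrderHom)
      map_zero' := rfl
      map_add' := fun _ _ => rfl }

lemma cechD_eq_objD {k : ℕ} (φ : Cochain ι Z A k) :
    cechD φ = (AlternatingCofaceMapComplex.objD (cosimplicial ι Z A) k).hom φ := by
  refine Eq.trans ?_ (AddCommGrpCat.hom_finset_sum_apply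
    (M := (cosimplicial ι Z A).obj (SimplexCategory.mk k))
    (N := (cosimplicial ι Z A).obj (SimplexCategory.mk (k + 1))) Finset.univ
    (fun i : Fin (k + 2) => (-1 : ℤ) ^ (i : ℕ) • (cosimplicial ι Z A).δ i) φ).symm
  funext σ z
  erw [Finset.sum_apply, Finset.sum_apply]
  rfl

theorem cechD_cechD {k : ℕ} (φ : Cochain ι Z A k) : cechD (cechD φ) = 0 := by
  rw [cechD_eq_objD, cechD_eq_objD]
  exact congrArg (fun f => AddCommGrpCat.Hom.hom f φ)
    (AlternatingCofaceMapComplex.d_squared (cosimplicial ι Z A) k)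

lemma cechD_add {k : ℕ} (φ ψ : Cochain ι Z A k) : cechD (φ + ψ) = cechD φ + cechD ψ := by
  funext σ z
  simp only [cechD, Pi.add_apply, smul_add, Finset.sum_add_distrib]

lemma cechD_zsmul {k : ℕ} (c : ℤ) (φ : Cochain ι Z A k) : cechD (c • φ) = c • cechD φ := by
  funext σ z
  simp only [cechD, Pi.smul_apply, smul_comm _ c, Finset.smul_sum]

end Differential

variable {ι Z A B C : Type*} [AddCommGroup A] [AddCommGroup B] [AddCommGroup C]

def cup (β : A →+ B →+ C) {k m n : ℕ} (φ : Cochain ι Z A k) (G : Cochain ι Z B m)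
    (h : k + m = n) : Cochain ι Z C n :=
  fun σ z => β (φ (fun i => σ (Fin.castLE (by omega) i)) z) (G (fun j => σ ⟨k + j, by omega⟩) z)

@[simp]
lemma cup_zero (β : A →+ B →+ C) {k m n : ℕ} (φ : Cochain ι Z A k) (h : k + m = n) :
    cup β φ (0 : Cochain ι Z B m) h = 0 := by
  funext σ z
  exact map_zero _

theorem cechD_cup (β : A →+ B →+ C) {k m n : ℕ} (φ : Cochain ι Z A k) (G : Cochain ι Z B m)
    (h : k + m = n) :
    cechD (cup β φ G h) =
      cup β (cechD φ) G (by omega) + (-1 : ℤ) ^ k • cup β φ (cechD G) (by omega) := by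
  funext σ z
  set u : Fin (k + 2) → ι := fun i => σ (Fin.castLE (by omega) i)
  set v : Fin (m + 2) → ι := fun j => σ ⟨k + j, by omega⟩
  have hu_last : u ∘ (Fin.last (k + 1)).succAbove = fun i => σ (Fin.castLE (by omega) i) := by
    funext i
    simp [u, Fin.succAbove_last]
  have hv_zero : v ∘ (0 : Fin (m + 2)).succAbove =
      fun j : Fin (m + 1) => σ ⟨k + 1 + j, by omega⟩ := by
    funext j
    refine congrArg σ (Fin.ext ?_)
    simp only [Fin.succAbove_zero, Fin.val_succ]
    omega
  -- Deleting a vertex `≤ k` of `σ` only changes its front face, deleting one `≥ k + 1` only its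
  -- back face; the face of `∂̌φ` without the last vertex cancels the face of `∂̌G` without the first.
  calc cechD (cup β φ G h) σ z
    _ = ∑ i : Fin (k + 1), (-1 : ℤ) ^ (i : ℕ) •
            β (φ (u ∘ i.castSucc.succAbove) z) (G (fun j : Fin (m + 1) => σ ⟨k + 1 + j, by omega⟩) z)
        + (-1 : ℤ) ^ k • ∑ j : Fin (m + 1), (-1 : ℤ) ^ ((j : ℕ) + 1) •
            β (φ (fun i => σ (Fin.castLE (by omega) i)) z) (G (v ∘ j.succ.succAbove) z) := by
      rw [cechD, Fin.sum_univ_split (show (k + 1) + (m + 1) = n + 2 by omega), Finset.smul_sum]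
      congr 1
      · refine Finset.sum_congr rfl fun i _ => ?_
        simp only [cup, Function.comp_apply, Fin.val_castLE, Fin.castLE_succAbove_castLE,
          Fin.castLE_succAbove_mk h.le]
        rfl
      · refine Finset.sum_congr rfl fun j _ => ?_
        simp only [cup, Function.comp_apply, Fin.mk_succAbove_castLE h.le, Fin.mk_succAbove_mk h.le,
          smul_smul, ← pow_add]
        congr 2
        omega
    _ = cup β (cechD φ) G (by omega) σ z + (-1 : ℤ) ^ k • cup β φ (cechD G) (by omega) σ z := by
      change _ = β (cechD φ u z) _ + (-1 : ℤ) ^ k • β _ (cechD G v z)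
      simp only [cechD, Fin.sum_univ_castSucc (n := k + 1), Fin.sum_univ_succ (n := m + 1), hu_last,
        hv_zero, map_add, map_sum, map_zsmul, AddMonoidHom.add_apply, AddMonoidHom.finsetSum_apply,
        AddMonoidHom.smul_apply, Fin.val_castSucc, Fin.val_last, Fin.val_zero, Fin.val_succ]
      module

def ofTriple (F : ι → ι → ι → Z → B) : Cochain ι Z B 2 :=
  fun τ => F (τ 0) (τ 1) (τ 2)

lemma cechD_ofTriple_eq_zero {F : ι → ι → ι → Z → B}
    (hF : ∀ a b c d z, F b c d z - F a c d z + F a b d z - F a b c z = 0) :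
    cechD (ofTriple F) = 0 := by
  funext σ z
  refine Eq.trans ?_ (hF (σ 0) (σ 1) (σ 2) (σ 3) z)
  simp [cechD, ofTriple, Fin.sum_univ_four, Fin.succAbove, sub_eq_add_neg]

end Cochain

def cupOnePairing (n : ℕ) : (Fin n → Fin n → ℤ) →+ (Fin n → ℤ) →+ (Fin n → ℤ) :=
  AddMonoidHom.mk' (fun ψ => AddMonoidHom.mk' (fun f l => ∑ i : Fin n, ∑ j : Fin n,
      if i < j then ψ i j * (f i * (if l = j then 1 else 0) - (if l = i then 1 else 0) * f j)
      else 0)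
    fun f g => funext fun l => by
      simp only [Pi.add_apply, ← Finset.sum_add_distrib]
      exact Finset.sum_congr rfl fun i _ => Finset.sum_congr rfl fun j _ => by split_ifs <;> ring)
    fun ψ ψ' => AddMonoidHom.ext fun f => funext fun l => by
      simp only [AddMonoidHom.mk'_apply, AddMonoidHom.add_apply, Pi.add_apply,
        ← Finset.sum_add_distrib]
      exact Finset.sum_congr rfl fun i _ => Finset.sum_congr rfl fun j _ => by split_ifs <;> ring

lemma cup1m_eq_cup {ι Z : Type*} {n k : ℕ} (ψ : Cochain ι Z (Fin n → Fin n → ℤ) k)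
    (F : ι → ι → ι → Z → Fin n → ℤ) :
    cup1m ψ F = Cochain.cup (cupOnePairing n) ψ (Cochain.ofTriple F) rfl :=
  rfl

lemma cechD_cup1m {ι Z : Type*} {n k : ℕ} {F : ι → ι → ι → Z → Fin n → ℤ}
    (hF : ∀ a b c d z, F b c d z - F a c d z + F a b d z - F a b c z = 0)
    (ψ : Cochain ι Z (Fin n → Fin n → ℤ) k) :
    cechD (cup1m ψ F) = cup1m (cechD ψ) F := by
  rw [cup1m_eq_cup, Cochain.cechD_cup, Cochain.cechD_ofTriple_eq_zero hF, Cochain.cup_zero,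
    smul_zero, add_zero]
  rfl

theorem stmt_3 {ι Z : Type*} {n : ℕ} (K : ℕ)
    (F : ι → ι → ι → Z → Fin n → ℤ)
    (hF : ∀ (a b c d : ι) (z : Z) (l : Fin n),
      F b c d z l - F a c d z l + F a b d z l - F a b c z l = 0)
    (p : Cochain ι Z (Fin n → ℤ) (K + 1) × Cochain ι Z (Fin n → Fin n → ℤ) K) :
    DFbar (K + 1) F (DFbar K F p) = 0 := by
  have leibniz := cechD_cup1m (fun a b c d z => funext (hF a b c d z)) p.2
  refine Prod.ext ?_ (Cochain.cechD_cechD p.2)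
  change cechD (cechD p.1 + (-1 : ℤ) ^ (K + 2) • cup1m p.2 F)
    + (-1 : ℤ) ^ (K + 1 + 2) • cup1m (cechD p.2) F = 0
  rw [Cochain.cechD_add, Cochain.cechD_cechD, Cochain.cechD_zsmul, leibniz]
  module
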